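/- arXiv:math/0504030 — 3 statements merged into one kernel-verified Lean document; each statement's English description precedes it below -/
import Mathlib

section
/- Fix integers N ≥ 1 and M ≥ 0 and set L = 2^{Nd}. For each k with N ≤ k ≤ L define h_k : ℝ^d → {0,1} as the indicator of the union over j = (j_1,…,j_d) ∈ {0,…,2^{k-N}-1}^d of the cubes ∏_{i=1}^d [j_i 2^{-k+N}, j_i 2^{-k+N} + 2^{-k-M}]. Then for indices N ≤ k ≤ k' ≤ L: the Lebesgue measure of the support of h_k·h_{k'} equals 2^{-(N+M)d} · max{2^{(k-k')d}, 2^{-(N+M)d}} if k' ≤ k+N+M, and equals 2^{-(N+M)d} · 2^{-(N+M)d} if k' ≥ k+N+M. -/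
/-!
In each coordinate, the support of `h_k` is the union `U_k` of `2^{k-N}` intervals of length
`ℓ_k = 2^{-k-M}` placed at the multiples of `2^{N-k}`, so the support of `h_k h_{k'}` is the
`d`-fold product of `U_k ∩ U_{k'}`. As `N ≥ 1`, each family consists of disjoint intervals, and
every interval of `U_k` starts at a left endpoint of `U_{k'}`; it contains exactly `T` intervals of
`U_{k'}` and meets the others in at most an endpoint, where `T = 1` when `ℓ_k ≤ 2^{N-k'}`, i.e.
`k' ≤ k + N + M`, and `T = 2^{k'-k-N-M}` otherwise. Hence `U_k ∩ U_{k'}` has length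
`2^{k-N} T ℓ_{k'}`, and the volume is the `d`-th power of that.
-/

open MeasureTheory

/-- The support of `h_k`: union over `j ∈ {0,…,2^{k-N}-1}^d` of the cubes
`∏_i [j_i 2^{-k+N}, j_i 2^{-k+N} + 2^{-k-M}]`. -/
def cubeUnion (d N M k : ℕ) : Set (EuclideanSpace ℝ (Fin d)) :=
  ⋃ (j : Fin d → ℕ) (_ : ∀ i, j i < 2 ^ (k - N)),
    WithLp.ofLp ⁻¹' Set.univ.pi fun i =>
      Set.Icc ((j i : ℝ) * (2 : ℝ) ^ ((N : ℤ) - (k : ℤ)))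
        ((j i : ℝ) * (2 : ℝ) ^ ((N : ℤ) - (k : ℤ)) + (2 : ℝ) ^ (-(k : ℤ) - (M : ℤ)))

open Set Function

def gridIntervals (n : ℕ) (s ℓ : ℝ) : Set ℝ :=
  ⋃ j ∈ Finset.range n, Icc (j * s) (j * s + ℓ)

lemma measurableSet_gridIntervals (n : ℕ) (s ℓ : ℝ) : MeasurableSet (gridIntervals n s ℓ) :=
  Finset.measurableSet_biUnion _ fun _ _ => measurableSet_Icc

lemma pairwise_disjoint_Icc_natCast_mul {s ℓ : ℝ} (hℓs : ℓ < s) :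
    Pairwise (Disjoint on fun j : ℕ => Icc (j * s) (j * s + ℓ)) := by
  suffices h : ∀ i j : ℕ, i < j → Disjoint (Icc (i * s) (i * s + ℓ)) (Icc (j * s) (j * s + ℓ)) by
    intro i j hij
    rcases hij.lt_or_gt with hij | hij
    exacts [h i j hij, (h j i hij).symm]
  intro i j hij
  refine Set.disjoint_left.2 fun x hxi hxj => ?_
  have hij' : (i : ℝ) + 1 ≤ j := by exact_mod_cast hij
  have hs : 0 < s := by linarith [hxi.1, hxi.2]
  nlinarith [hxi.2, hxj.1]

lemma volume_Icc_inter_Icc_eq_zero {a b c e : ℝ} (h : b ≤ c ∨ e ≤ a) :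
    volume (Icc a b ∩ Icc c e) = 0 := by
  rw [Icc_inter_Icc, Real.volume_Icc, ENNReal.ofReal_eq_zero, sub_nonpos]
  rcases h with h | h
  exacts [inf_le_left.trans (h.trans le_sup_right), inf_le_right.trans (h.trans le_sup_left)]

/-- The interval at `m * s` contains the grid intervals at `m * s, …, (m + T - 1) * s` and meets
the others in at most one point. -/
lemma volume_Icc_inter_gridIntervals {n m T : ℕ} {s ℓ ℓ' : ℝ} (hℓ' : 0 ≤ ℓ') (hℓ's : ℓ' < s)
    (hmT : m + T ≤ n) (hℓT : ℓ ≤ T * s) (hTℓ : T * s + ℓ' ≤ ℓ + s) :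
    volume (Icc (m * s) (m * s + ℓ) ∩ gridIntervals n s ℓ') = T * ENNReal.ofReal ℓ' := by
  have hs : 0 ≤ s := hℓ'.trans hℓ's.le
  have hterm : ∀ j : ℕ, volume (Icc (m * s) (m * s + ℓ) ∩ Icc (j * s) (j * s + ℓ')) =
      if j ∈ Finset.Ico m (m + T) then ENNReal.ofReal ℓ' else 0 := by
    intro j
    split_ifs with hj
    · obtain ⟨hmj, hjT⟩ := Finset.mem_Ico.1 hj
      have hmj' : (m : ℝ) ≤ j := by exact_mod_cast hmj
      have hjT' : (j : ℝ) + 1 ≤ m + T := by exact_mod_cast hjT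
      have h1 := mul_le_mul_of_nonneg_right hmj' hs
      have h2 := mul_le_mul_of_nonneg_right hjT' hs
      rw [inter_eq_right.2 (Icc_subset_Icc (by linarith) (by linarith)), Real.volume_Icc,
        add_sub_cancel_left]
    · refine volume_Icc_inter_Icc_eq_zero ?_
      rcases not_and_or.1 (Finset.mem_Ico.not.1 hj) with hj | hj
      · have hjm : (j : ℝ) + 1 ≤ m := by exact_mod_cast Nat.lt_of_not_le hj
        right; nlinarith
      · have hjT : (m : ℝ) + T ≤ j := by exact_mod_cast Nat.le_of_not_lt hj
        left; nlinarith
  have hIco : Finset.range n ∩ Finset.Ico m (m + T) = Finset.Ico m (m + T) :=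
    Finset.inter_eq_right.2 fun j hj => Finset.mem_range.2 ((Finset.mem_Ico.1 hj).2.trans_le hmT)
  rw [gridIntervals, inter_iUnion₂, measure_biUnion_finset
      (PairwiseDisjoint.mono ((pairwise_disjoint_Icc_natCast_mul hℓ's).set_pairwise _)
        fun _ => inter_subset_right)
      fun _ _ => measurableSet_Icc.inter measurableSet_Icc,
    Finset.sum_congr rfl fun j _ => hterm j, Finset.sum_ite_mem, hIco, Finset.sum_const,
    Nat.card_Ico, add_tsub_cancel_left, nsmul_eq_mul]

lemma volume_gridIntervals_inter_gridIntervals {n B T : ℕ} {s ℓ ℓ' : ℝ} (hℓs : ℓ < B * s)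
    (hℓ' : 0 ≤ ℓ') (hℓ's : ℓ' < s) (hTB : T ≤ B) (hℓT : ℓ ≤ T * s) (hTℓ : T * s + ℓ' ≤ ℓ + s) :
    volume (gridIntervals n (B * s) ℓ ∩ gridIntervals (n * B) s ℓ') =
      n * T * ENNReal.ofReal ℓ' := by
  have hterm : ∀ j ∈ Finset.range n,
      volume (Icc (j * (B * s)) (j * (B * s) + ℓ) ∩ gridIntervals (n * B) s ℓ') =
        T * ENNReal.ofReal ℓ' := by
    intro j hj
    have hjB : j * B + T ≤ n * B := by
      nlinarith [Nat.succ_le_of_lt (Finset.mem_range.1 hj)]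
    rw [← mul_assoc, ← Nat.cast_mul]
    exact volume_Icc_inter_gridIntervals hℓ' hℓ's hjB hℓT hTℓ
  nth_rw 1 [gridIntervals]
  rw [iUnion₂_inter, measure_biUnion_finset
      (PairwiseDisjoint.mono ((pairwise_disjoint_Icc_natCast_mul hℓs).set_pairwise _)
        fun _ => inter_subset_left)
      fun _ _ => measurableSet_Icc.inter (measurableSet_gridIntervals _ _ _),
    Finset.sum_congr rfl hterm, Finset.sum_const, Finset.card_range, nsmul_eq_mul, mul_assoc]

lemma volume_preimage_ofLp_pi {ι : Type*} [Fintype ι] {s : ι → Set ℝ}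
    (hs : ∀ i, MeasurableSet (s i)) :
    volume (WithLp.ofLp ⁻¹' univ.pi s : Set (EuclideanSpace ℝ ι)) = ∏ i, volume (s i) := by
  rw [(PiLp.volume_preserving_ofLp ι).measure_preimage
    (MeasurableSet.univ_pi hs).nullMeasurableSet, volume_pi_pi]

lemma cubeUnion_eq_preimage_pi (d N M k : ℕ) :
    cubeUnion d N M k = WithLp.ofLp ⁻¹' univ.pi fun _ : Fin d =>
      gridIntervals (2 ^ (k - N)) (2 ^ ((N : ℤ) - k)) (2 ^ (-(k : ℤ) - M)) := by
  ext x
  simp only [cubeUnion, gridIntervals, mem_iUnion, mem_preimage, mem_univ_pi, Finset.mem_range,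
    exists_prop]
  refine ⟨fun ⟨j, hj, hx⟩ i => ⟨j i, hj i, hx i⟩, fun h => ?_⟩
  choose j hj hx using h
  exact ⟨j, hj, hx⟩

lemma support_indicator_one_mul_indicator_one {α M₀ : Type*} [MulZeroOneClass M₀]
    [NoZeroDivisors M₀] [NeZero (1 : M₀)] (s t : Set α) :
    (support fun x => s.indicator (fun _ => (1 : M₀)) x * t.indicator (fun _ => (1 : M₀)) x) =
      s ∩ t := by
  rw [support_mul, support_indicator, support_indicator, support_const one_ne_zero, inter_univ,
    inter_univ]

lemma natCast_two_pow_mul_two_zpow (a : ℕ) (b : ℤ) :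
    ((2 ^ a : ℕ) : ℝ) * 2 ^ b = 2 ^ ((a : ℤ) + b) := by
  rw [zpow_add₀ two_ne_zero, zpow_natCast, Nat.cast_pow, Nat.cast_ofNat]

lemma volume_cubeUnion_inter_cubeUnion {d N M k k' t : ℕ} (hN : 1 ≤ N) (hNk : N ≤ k)
    (hkk' : k ≤ k') (ht : t ≤ k' - k)
    (hcover : (2 : ℝ) ^ (-(k : ℤ) - M) ≤ 2 ^ t * 2 ^ ((N : ℤ) - k'))
    (hfit : (2 : ℝ) ^ t * 2 ^ ((N : ℤ) - k') + 2 ^ (-(k' : ℤ) - M) ≤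
      2 ^ (-(k : ℤ) - M) + 2 ^ ((N : ℤ) - k')) :
    volume (cubeUnion d N M k ∩ cubeUnion d N M k') =
      ENNReal.ofReal (2 ^ (((k : ℤ) - N + t - k' - M) * d)) := by
  have hB : ((2 ^ (k' - k) : ℕ) : ℝ) * 2 ^ ((N : ℤ) - k') = 2 ^ ((N : ℤ) - k) := by
    rw [natCast_two_pow_mul_two_zpow]; congr 1; omega
  have hnB : 2 ^ (k - N) * 2 ^ (k' - k) = 2 ^ (k' - N) := by
    rw [← pow_add]; congr 1; omega
  have hℓs : (2 : ℝ) ^ (-(k : ℤ) - M) < ((2 ^ (k' - k) : ℕ) : ℝ) * 2 ^ ((N : ℤ) - k') := by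
    rw [hB]; exact zpow_lt_zpow_right₀ one_lt_two (by omega)
  have hvol := volume_gridIntervals_inter_gridIntervals (n := 2 ^ (k - N)) (T := 2 ^ t)
    (ℓ' := 2 ^ (-(k' : ℤ) - M)) hℓs (by positivity) (zpow_lt_zpow_right₀ one_lt_two (by omega))
    (Nat.pow_le_pow_right two_pos ht) (by exact_mod_cast hcover) (by exact_mod_cast hfit)
  rw [hB, hnB] at hvol
  rw [cubeUnion_eq_preimage_pi, cubeUnion_eq_preimage_pi, ← preimage_inter, ← pi_inter_distrib,
    volume_preimage_ofLp_pi fun _ => (measurableSet_gridIntervals _ _ _).inter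
      (measurableSet_gridIntervals _ _ _), Finset.prod_const, Finset.card_univ, Fintype.card_fin,
    hvol, ← ENNReal.ofReal_natCast, ← ENNReal.ofReal_natCast, ← ENNReal.ofReal_mul (by positivity),
    ← ENNReal.ofReal_mul (by positivity), ← ENNReal.ofReal_pow (by positivity),
    mul_assoc, natCast_two_pow_mul_two_zpow, natCast_two_pow_mul_two_zpow, ← zpow_natCast,
    ← zpow_mul, Nat.cast_sub hNk]
  ring_nf

theorem cubeUnion_inter_volume_general (d N M : ℕ) (hN : 1 ≤ N)
    (k k' : ℕ) (hNk : N ≤ k) (hkk' : k ≤ k') :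
    (k' ≤ k + N + M →
      volume (Function.support fun x =>
          (cubeUnion d N M k).indicator (fun _ => (1 : ℝ)) x *
            (cubeUnion d N M k').indicator (fun _ => (1 : ℝ)) x)
        = ENNReal.ofReal ((2 : ℝ) ^ (-((N : ℤ) + (M : ℤ)) * (d : ℤ)) *
            max ((2 : ℝ) ^ (((k : ℤ) - (k' : ℤ)) * (d : ℤ)))
              ((2 : ℝ) ^ (-((N : ℤ) + (M : ℤ)) * (d : ℤ)))))
    ∧ (k + N + M ≤ k' →
      volume (Function.support fun x =>
          (cubeUnion d N M k).indicator (fun _ => (1 : ℝ)) x *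
            (cubeUnion d N M k').indicator (fun _ => (1 : ℝ)) x)
        = ENNReal.ofReal ((2 : ℝ) ^ (-((N : ℤ) + (M : ℤ)) * (d : ℤ)) *
            (2 : ℝ) ^ (-((N : ℤ) + (M : ℤ)) * (d : ℤ)))) := by
  rw [support_indicator_one_mul_indicator_one]
  have hℓ'ℓ : (2 : ℝ) ^ (-(k' : ℤ) - M) ≤ 2 ^ (-(k : ℤ) - M) :=
    zpow_le_zpow_right₀ one_le_two (by omega)
  have hℓ's : (2 : ℝ) ^ (-(k' : ℤ) - M) ≤ 2 ^ ((N : ℤ) - k') :=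
    zpow_le_zpow_right₀ one_le_two (by omega)
  refine ⟨fun hk' => ?_, fun hk' => ?_⟩
  · have hcover : (2 : ℝ) ^ (-(k : ℤ) - M) ≤ 2 ^ 0 * 2 ^ ((N : ℤ) - k') := by
      rw [pow_zero, one_mul]; exact zpow_le_zpow_right₀ one_le_two (by omega)
    rw [volume_cubeUnion_inter_cubeUnion hN hNk hkk' (Nat.zero_le _) hcover (by linarith),
      max_eq_left (zpow_le_zpow_right₀ one_le_two
        (mul_le_mul_of_nonneg_right (by omega) (Nat.cast_nonneg d))), ← zpow_add₀ two_ne_zero]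
    ring_nf
  · have ht : ((k' - k - N - M : ℕ) : ℤ) = k' - k - N - M := by omega
    have hcover : (2 : ℝ) ^ (k' - k - N - M) * 2 ^ ((N : ℤ) - k') = 2 ^ (-(k : ℤ) - M) := by
      rw [← zpow_natCast, ← zpow_add₀ two_ne_zero, ht]; ring_nf
    rw [volume_cubeUnion_inter_cubeUnion hN hNk hkk' (by omega) hcover.ge (by linarith),
      ← zpow_add₀ two_ne_zero, ht]
    ring_nf

/-- With `h_k` the indicator of `cubeUnion d N M k` and `N ≤ k ≤ k' ≤ L = 2^{Nd}`,
the Lebesgue measure of the support of `h_k · h_{k'}` equals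
`2^{-(N+M)d} · max{2^{(k-k')d}, 2^{-(N+M)d}}` if `k' ≤ k+N+M`, and
`2^{-(N+M)d} · 2^{-(N+M)d}` if `k' ≥ k+N+M`. -/
theorem cubeUnion_inter_volume (d N M : ℕ) (hd : 1 ≤ d) (hN : 1 ≤ N)
    (k k' : ℕ) (hNk : N ≤ k) (hkk' : k ≤ k') (hk'L : k' ≤ 2 ^ (N * d)) :
    (k' ≤ k + N + M →
      volume (Function.support fun x =>
          (cubeUnion d N M k).indicator (fun _ => (1 : ℝ)) x *
            (cubeUnion d N M k').indicator (fun _ => (1 : ℝ)) x)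
        = ENNReal.ofReal ((2 : ℝ) ^ (-((N : ℤ) + (M : ℤ)) * (d : ℤ)) *
            max ((2 : ℝ) ^ (((k : ℤ) - (k' : ℤ)) * (d : ℤ)))
              ((2 : ℝ) ^ (-((N : ℤ) + (M : ℤ)) * (d : ℤ)))))
    ∧ (k + N + M ≤ k' →
      volume (Function.support fun x =>
          (cubeUnion d N M k).indicator (fun _ => (1 : ℝ)) x *
            (cubeUnion d N M k').indicator (fun _ => (1 : ℝ)) x)
        = ENNReal.ofReal ((2 : ℝ) ^ (-((N : ℤ) + (M : ℤ)) * (d : ℤ)) *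
            (2 : ℝ) ^ (-((N : ℤ) + (M : ℤ)) * (d : ℤ)))) :=
  cubeUnion_inter_volume_general d N M hN k k' hNk hkk'
end

section
/- Let σ ≥ 0, r > 0, s > 0 with σ ≥ d/s, and let g : ℝ^d → ℂ be measurable, bounded, and constant on each dyadic cube of sidelength 1/r (taking only values 0 and 1). Then for every integer l ≥ 0 and every x, sup_{2^l/r ≤ |y| ≤ 2^{l+1}/r} |g(x+y)| ≤ C_s 2^{l d/s} (M(|g|^s)(x))^{1/s}, where M is the Hardy–Littlewood maximal operator and C_s depends only on s and d. -/
/-!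
If `g (x + y) = 1`, then `g = 1` on the whole grid cube containing `x + y`, hence on the ball of
radius `1 / (2r)` about its centre. That ball lies in the ball about `x` of radius
`2 ^ l (5 + √d) / (2r)`, so the average of `|g| ^ s` over the latter, and with it
`M(|g| ^ s)(x)`, is at least `(2 ^ l (5 + √d)) ^ (-d)`.
-/

open MeasureTheory Metric

/-- The (uncentered-over-radii, centered) Hardy–Littlewood maximal function of a
nonnegative function `g` on `ℝ^d`. -/
noncomputable def hlMax (d : ℕ) (g : EuclideanSpace ℝ (Fin d) → ℝ)
    (x : EuclideanSpace ℝ (Fin d)) : ENNReal :=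
  ⨆ (r : ℝ) (_ : 0 < r),
    (∫⁻ y in Metric.ball x r, ENNReal.ofReal (g y)) / volume (Metric.ball x r)

lemma EuclideanSpace.norm_le_sqrt_card_mul {ι : Type*} [Fintype ι] (w : EuclideanSpace ℝ ι)
    {M : ℝ} (hM : 0 ≤ M) (h : ∀ i, |w i| ≤ M) : ‖w‖ ≤ √(Fintype.card ι) * M := by
  rw [EuclideanSpace.norm_eq, ← Real.sqrt_sq hM, ← Real.sqrt_mul (Nat.cast_nonneg _)]
  gcongr
  calc ∑ i, ‖w i‖ ^ 2 ≤ ∑ _i : ι, M ^ 2 := by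
        gcongr with i
        exact Real.norm_eq_abs (w i) ▸ h i
    _ = Fintype.card ι * M ^ 2 := by simp

section Grid

variable {ι : Type*} {r : ℝ}

/-- The centre of the cube `∏ i, [n i / r, (n i + 1) / r)` of the grid of sidelength `1 / r`
that contains `p`. -/
noncomputable def gridCenter (r : ℝ) (p : EuclideanSpace ℝ ι) : EuclideanSpace ℝ ι :=
  WithLp.toLp 2 fun i => (⌊p i * r⌋ + 1 / 2) / r

lemma gridCenter_apply_mul (hr : 0 < r) (p : EuclideanSpace ℝ ι) (i : ι) :
    gridCenter r p i * r = ⌊p i * r⌋ + 1 / 2 :=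
  div_mul_cancel₀ _ hr.ne'

lemma floor_mul_eq_of_mem_ball_gridCenter [Fintype ι] (hr : 0 < r) {p z : EuclideanSpace ℝ ι}
    (hz : z ∈ ball (gridCenter r p) (2 * r)⁻¹) (i : ι) : ⌊z i * r⌋ = ⌊p i * r⌋ := by
  have hzi : |z i - gridCenter r p i| < (2 * r)⁻¹ :=
    (PiLp.dist_apply_le z _ i).trans_lt (mem_ball.1 hz)
  have hzr : |z i * r - gridCenter r p i * r| < 1 / 2 := by
    rw [← sub_mul, abs_mul, abs_of_pos hr]
    calc |z i - gridCenter r p i| * r < (2 * r)⁻¹ * r := by gcongr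
      _ = 1 / 2 := by field_simp
  rw [gridCenter_apply_mul hr, abs_lt] at hzr
  rw [Int.floor_eq_iff]
  constructor <;> linarith [hzr.1, hzr.2]

lemma dist_gridCenter_le [Fintype ι] (hr : 0 < r) (p : EuclideanSpace ℝ ι) :
    dist (gridCenter r p) p ≤ √(Fintype.card ι) * (2 * r)⁻¹ := by
  rw [dist_eq_norm]
  refine EuclideanSpace.norm_le_sqrt_card_mul _ (by positivity) fun i => ?_
  have hi : (gridCenter r p - p) i = (gridCenter r p i * r - p i * r) / r := by
    simp only [PiLp.sub_apply]
    field_simp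
  rw [hi, gridCenter_apply_mul hr, abs_div, abs_of_pos hr, mul_inv, ← div_eq_mul_inv]
  gcongr
  rw [abs_le]
  constructor <;> linarith [Int.floor_le (p i * r), Int.lt_floor_add_one (p i * r)]

lemma ball_gridCenter_subset_ball [Fintype ι] (hr : 0 < r) (l : ℕ) (x y : EuclideanSpace ℝ ι)
    (hy : ‖y‖ ≤ 2 ^ (l + 1) / r) :
    ball (gridCenter r (x + y)) (2 * r)⁻¹
      ⊆ ball x (2 ^ l * (5 + √(Fintype.card ι)) * (2 * r)⁻¹) := by
  refine ball_subset_ball' ?_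
  have hxy : dist (x + y) x ≤ 2 ^ l * 4 * (2 * r)⁻¹ := by
    rw [dist_eq_norm, add_sub_cancel_left]
    convert hy using 1
    field_simp
    ring
  have h2l : (1 : ℝ) ≤ 2 ^ l := one_le_pow₀ (by norm_num)
  have hρ : 0 < (2 * r)⁻¹ := by positivity
  have hsqrt : 0 ≤ √(Fintype.card ι : ℝ) := Real.sqrt_nonneg _
  calc (2 * r)⁻¹ + dist (gridCenter r (x + y)) x
      ≤ (2 * r)⁻¹ + (√(Fintype.card ι) * (2 * r)⁻¹ + 2 ^ l * 4 * (2 * r)⁻¹) := by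
        gcongr
        exact (dist_triangle _ _ _).trans (add_le_add (dist_gridCenter_le hr _) hxy)
    _ ≤ 2 ^ l * (5 + √(Fintype.card ι)) * (2 * r)⁻¹ := by
        nlinarith [mul_le_mul_of_nonneg_right h2l
          (mul_nonneg (add_nonneg zero_le_one hsqrt) hρ.le)]

end Grid

lemma ofReal_div_pow_le_hlMax {d : ℕ} {g : EuclideanSpace ℝ (Fin d) → ℝ}
    {x c : EuclideanSpace ℝ (Fin d)} {ρ R : ℝ} (hρ : 0 < ρ) (hR : 0 < R)
    (hsub : ball c ρ ⊆ ball x R) (hg : ∀ z ∈ ball c ρ, 1 ≤ g z) :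
    ENNReal.ofReal ((ρ / R) ^ d) ≤ hlMax d g x := by
  have hvol : volume (ball c ρ) ≤ ∫⁻ z in ball x R, ENNReal.ofReal (g z) :=
    calc volume (ball c ρ) = ∫⁻ _ in ball c ρ, 1 := (setLIntegral_one _).symm
      _ ≤ ∫⁻ z in ball c ρ, ENNReal.ofReal (g z) :=
        setLIntegral_mono' measurableSet_ball fun z hz => ENNReal.one_le_ofReal.2 (hg z hz)
      _ ≤ ∫⁻ z in ball x R, ENNReal.ofReal (g z) := lintegral_mono_set hsub
  have hunit₀ : volume (ball (0 : EuclideanSpace ℝ (Fin d)) 1) ≠ 0 :=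
    (measure_ball_pos _ _ one_pos).ne'
  have hunit : volume (ball (0 : EuclideanSpace ℝ (Fin d)) 1) ≠ ⊤ := measure_ball_lt_top.ne
  calc ENNReal.ofReal ((ρ / R) ^ d) = volume (ball c ρ) / volume (ball x R) := by
        rw [Measure.addHaar_ball_of_pos volume c hρ, Measure.addHaar_ball_of_pos volume x hR,
          finrank_euclideanSpace_fin, ENNReal.mul_div_mul_right _ _ hunit₀ hunit,
          ← ENNReal.ofReal_div_of_pos (by positivity), div_pow]
    _ ≤ (∫⁻ z in ball x R, ENNReal.ofReal (g z)) / volume (ball x R) := by gcongr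
    _ ≤ hlMax d g x := le_iSup₂_of_le R hR le_rfl

lemma one_le_ofReal_rpow_mul_rpow {t s : ℝ} (ht : 0 < t) (hs : 0 < s) {d : ℕ} {M : ENNReal}
    (hM : ENNReal.ofReal (t⁻¹ ^ d) ≤ M) :
    1 ≤ ENNReal.ofReal (t ^ ((d : ℝ) / s)) * M ^ (1 / s) := by
  calc (1 : ENNReal)
      = ENNReal.ofReal (t ^ ((d : ℝ) / s)) * ENNReal.ofReal (t⁻¹ ^ d) ^ (1 / s) := by
        rw [ENNReal.ofReal_rpow_of_nonneg (by positivity) (by positivity), ← ENNReal.ofReal_mul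
          (by positivity), ← Real.rpow_natCast, ← Real.rpow_mul (by positivity),
          Real.inv_rpow ht.le, mul_one_div, mul_inv_cancel₀ (by positivity), ENNReal.ofReal_one]
    _ ≤ ENNReal.ofReal (t ^ ((d : ℝ) / s)) * M ^ (1 / s) := by gcongr

theorem grid_indicator_max_bound_general (d : ℕ) (s : ℝ) (hs : 0 < s) :
    ∃ C : ℝ, 0 < C ∧ ∀ (r : ℝ), 0 < r → ∀ g : EuclideanSpace ℝ (Fin d) → ℝ,
      Measurable g → (∀ x, g x = 0 ∨ g x = 1) →
      (∀ x y : EuclideanSpace ℝ (Fin d), (∀ i, ⌊x i * r⌋ = ⌊y i * r⌋) → g x = g y) →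
      ∀ (l : ℕ) (x y : EuclideanSpace ℝ (Fin d)),
        (2 : ℝ) ^ l / r ≤ ‖y‖ → ‖y‖ ≤ (2 : ℝ) ^ (l + 1) / r →
        ENNReal.ofReal |g (x + y)|
          ≤ ENNReal.ofReal (C * (2 : ℝ) ^ ((l : ℝ) * (d : ℝ) / s)) *
              (hlMax d (fun z => |g z| ^ s) x) ^ (1 / s) := by
  refine ⟨(5 + √d) ^ ((d : ℝ) / s), by positivity, ?_⟩
  intro r hr g _ hg01 hgc l x y _ hy
  rcases hg01 (x + y) with h0 | h1
  · simp [h0]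
  have hcube : ∀ z ∈ ball (gridCenter r (x + y)) (2 * r)⁻¹, 1 ≤ |g z| ^ s := fun z hz => by
    rw [hgc z (x + y) (floor_mul_eq_of_mem_ball_gridCenter hr hz), h1, abs_one, Real.one_rpow]
  have hsub := ball_gridCenter_subset_ball hr l x y hy
  rw [Fintype.card_fin] at hsub
  have hM := ofReal_div_pow_le_hlMax (by positivity) (by positivity) hsub hcube
  rw [div_mul_cancel_right₀ (by positivity)] at hM
  have hC : (5 + √d) ^ ((d : ℝ) / s) * (2 : ℝ) ^ ((l : ℝ) * d / s)
      = (2 ^ l * (5 + √d)) ^ ((d : ℝ) / s) := by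
    rw [Real.mul_rpow (by positivity) (by positivity), mul_div_assoc, Real.rpow_mul zero_le_two,
      Real.rpow_natCast, mul_comm]
  rw [h1, abs_one, ENNReal.ofReal_one, hC]
  exact one_le_ofReal_rpow_mul_rpow (by positivity) hs hM

/-- If `g : ℝ^d → {0,1}` is constant on each half-open grid cube of sidelength `1/r`,
then for every `l ≥ 0` and every `x`,
`sup_{2^l/r ≤ |y| ≤ 2^{l+1}/r} |g(x+y)| ≤ C_s 2^{ld/s} (M(|g|^s)(x))^{1/s}`,
with `C_s` depending only on `s` and `d`. -/
theorem grid_indicator_max_bound (d : ℕ) (hd : 1 ≤ d) (s σ : ℝ) (hs : 0 < s)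
    (hσ : (d : ℝ) / s ≤ σ) :
    ∃ C : ℝ, 0 < C ∧ ∀ (r : ℝ), 0 < r → ∀ g : EuclideanSpace ℝ (Fin d) → ℝ,
      Measurable g → (∀ x, g x = 0 ∨ g x = 1) →
      (∀ x y : EuclideanSpace ℝ (Fin d), (∀ i, ⌊x i * r⌋ = ⌊y i * r⌋) → g x = g y) →
      ∀ (l : ℕ) (x y : EuclideanSpace ℝ (Fin d)),
        (2 : ℝ) ^ l / r ≤ ‖y‖ → ‖y‖ ≤ (2 : ℝ) ^ (l + 1) / r →
        ENNReal.ofReal |g (x + y)|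
          ≤ ENNReal.ofReal (C * (2 : ℝ) ^ ((l : ℝ) * (d : ℝ) / s)) *
              (hlMax d (fun z => |g z| ^ s) x) ^ (1 / s) :=
  grid_indicator_max_bound_general d s hs
end

section
/- Let 0 < s ≤ 1 and let h : ℝ^d → {0,1} be a finite sum of indicator functions of disjoint dyadic cubes of sidelength 2^{-n}, and let η be a Schwartz function with η_n(x) = 2^{nd} η(2^n x). Then |η_n * h(x)| ≤ C_s (M(h^s)(x))^{1/s} for all x, where M is the Hardy–Littlewood maximal operator and C_s depends only on η, s, d. -/
/-!
Let `ρ` be the distance from `x` to `{h = 1}` and `t = 1 + 2ⁿρ`. Since `h` vanishes on the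
ball `B(x, ρ)`, the decay `|η z| ≲ (1 + |z|)^{-(d + 1 + K)}` gives `|η_n * h(x)| ≲ t^{-K}`.
Conversely, some point of `{h = 1}` lies within `ρ + 2⁻ⁿ` of `x`, and `h = 1` on its whole
dyadic cube; the ball of radius `2⁻ⁿ⁻¹` around the cube's center lies in `B(x, (2 + d)(ρ + 2⁻ⁿ))`,
so `M(h^s)(x) ≳ t^{-d}`. With `K ≥ d / s` the two bounds combine.
-/

open MeasureTheory

open Metric Module

theorem SchwartzMap.exists_norm_le_div_one_add_norm_pow {E F : Type*} [NormedAddCommGroup E]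
    [NormedSpace ℝ E] [NormedAddCommGroup F] [NormedSpace ℝ F] (f : SchwartzMap E F) (k : ℕ) :
    ∃ B : ℝ, 0 ≤ B ∧ ∀ x, ‖f x‖ ≤ B / (1 + ‖x‖) ^ k := by
  refine ⟨2 ^ k * (Finset.Iic (k, 0)).sup (fun m => SchwartzMap.seminorm ℝ m.1 m.2) f,
    by positivity, fun x => ?_⟩
  have h := SchwartzMap.one_add_le_sup_seminorm_apply (𝕜 := ℝ) (m := (k, 0)) le_rfl le_rfl f x
  rw [norm_iteratedFDeriv_zero] at h
  rw [le_div_iff₀ (by positivity), mul_comm]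
  exact h

theorem abs_le_div_mul_inv_of_le_norm {E : Type*} [SeminormedAddGroup E] {η : E → ℝ} {B : ℝ}
    {N K : ℕ} (hB : 0 ≤ B) (hη : ∀ z, |η z| ≤ B / (1 + ‖z‖) ^ (N + K)) {a : ℝ} (ha : 0 ≤ a)
    {w : E} (hw : a ≤ ‖w‖) :
    |η w| ≤ B / (1 + a) ^ K * ((1 + ‖w‖) ^ N)⁻¹ := by
  calc |η w| ≤ B / ((1 + ‖w‖) ^ N * (1 + ‖w‖) ^ K) := by rw [← pow_add]; exact hη w
    _ ≤ B / ((1 + ‖w‖) ^ N * (1 + a) ^ K) := by gcongr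
    _ = B / (1 + a) ^ K * ((1 + ‖w‖) ^ N)⁻¹ := by field_simp

section Rescaling

variable {E : Type*} [NormedAddCommGroup E] [NormedSpace ℝ E] [FiniteDimensional ℝ E]
  [MeasurableSpace E] [BorelSpace E] (μ : Measure E) [μ.IsAddHaarMeasure]

theorem integrable_inv_one_add_norm_pow {N : ℕ} (hN : finrank ℝ E < N) :
    Integrable (fun u : E => ((1 + ‖u‖) ^ N)⁻¹) μ := by
  refine (integrable_one_add_norm (μ := μ) (r := N) (by exact_mod_cast hN)).congr
    (.of_forall fun u => ?_)
  simp only [Real.rpow_neg (by positivity : (0 : ℝ) ≤ 1 + ‖u‖), Real.rpow_natCast]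

theorem MeasureTheory.Integrable.comp_smul_sub {f : E → ℝ} (hf : Integrable f μ) {p : ℝ}
    (hp : p ≠ 0) (x : E) :
    Integrable (fun y => f (p • (x - y))) μ :=
  ((integrable_comp_smul_iff μ f hp).2 hf).comp_sub_left x

theorem integral_pow_finrank_mul_comp_smul_sub (f : E → ℝ) {p : ℝ} (hp : 0 < p) (x : E) :
    ∫ y, p ^ finrank ℝ E * f (p • (x - y)) ∂μ = ∫ u, f u ∂μ := by
  rw [integral_const_mul, integral_sub_left_eq_self (fun u => f (p • u)) μ x,
    Measure.integral_comp_smul_of_nonneg μ f p (hR := hp.le), smul_eq_mul,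
    mul_inv_cancel_left₀ (by positivity)]

theorem Measure.addHaar_ball_div_addHaar_ball (c x : E) {ε R : ℝ} (hε : 0 < ε) (hR : 0 < R) :
    μ (ball c ε) / μ (ball x R) = ENNReal.ofReal ((ε / R) ^ finrank ℝ E) := by
  rw [μ.addHaar_ball_of_pos c hε, μ.addHaar_ball_of_pos x hR,
    ENNReal.mul_div_mul_right _ _ (measure_ball_pos μ 0 one_pos).ne' measure_ball_lt_top.ne,
    ← ENNReal.ofReal_div_of_pos (by positivity), div_pow]

theorem abs_integral_rescaled_mul_le {η h : E → ℝ} {B : ℝ} {N K : ℕ} (hB : 0 ≤ B)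
    (hN : finrank ℝ E < N) (hη : ∀ z, |η z| ≤ B / (1 + ‖z‖) ^ (N + K))
    (hh : ∀ y, |h y| ≤ 1) {S : Set E} (hzero : ∀ y ∉ S, h y = 0) {p : ℝ} (hp : 0 < p) (x : E) :
    |∫ y, p ^ finrank ℝ E * η (p • (x - y)) * h y ∂μ|
      ≤ B / (1 + p * infDist x S) ^ K * ∫ u, ((1 + ‖u‖) ^ N)⁻¹ ∂μ := by
  set ρ := infDist x S
  have hρ : 0 ≤ ρ := infDist_nonneg
  set majorant : E → ℝ := fun u => B / (1 + p * ρ) ^ K * ((1 + ‖u‖) ^ N)⁻¹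
  have hpointwise : ∀ y, ‖p ^ finrank ℝ E * η (p • (x - y)) * h y‖
      ≤ p ^ finrank ℝ E * majorant (p • (x - y)) := by
    intro y
    rw [Real.norm_eq_abs, abs_mul, abs_mul, abs_of_pos (by positivity), mul_assoc]
    gcongr
    by_cases hy : dist x y < ρ
    · rw [hzero y fun hyS => hy.not_ge (infDist_le_dist_of_mem hyS), abs_zero, mul_zero]
      positivity
    · have hnorm : p * ρ ≤ ‖p • (x - y)‖ := by
        rw [norm_smul, Real.norm_of_nonneg hp.le, ← dist_eq_norm]
        exact mul_le_mul_of_nonneg_left (not_lt.1 hy) hp.le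
      calc |η (p • (x - y))| * |h y| ≤ |η (p • (x - y))| :=
            mul_le_of_le_one_right (abs_nonneg _) (hh y)
        _ ≤ majorant (p • (x - y)) :=
          abs_le_div_mul_inv_of_le_norm hB hη (by positivity) hnorm
  have hint : Integrable majorant μ := (integrable_inv_one_add_norm_pow μ hN).const_mul _
  calc _ ≤ ∫ y, p ^ finrank ℝ E * majorant (p • (x - y)) ∂μ :=
        norm_integral_le_of_norm_le ((hint.comp_smul_sub μ hp.ne' x).const_mul _)
          (.of_forall hpointwise)
    _ = ∫ u, majorant u ∂μ := integral_pow_finrank_mul_comp_smul_sub μ majorant hp x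
    _ = _ := integral_const_mul _ _

end Rescaling

section Euclidean

variable {d : ℕ}

theorem volume_ball_div_volume_ball_le_hlMax {g : EuclideanSpace ℝ (Fin d) → ℝ}
    {c x : EuclideanSpace ℝ (Fin d)} {ε R : ℝ} (hR : 0 < R) (hsub : ball c ε ⊆ ball x R)
    (hg : ∀ z ∈ ball c ε, 1 ≤ g z) :
    volume (ball c ε) / volume (ball x R) ≤ hlMax d g x := by
  refine le_trans ?_ (le_iSup₂ (f := fun r (_ : 0 < r) =>
    (∫⁻ y in ball x r, ENNReal.ofReal (g y)) / volume (ball x r)) R hR)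
  gcongr
  calc volume (ball c ε) = ∫⁻ _ in ball c ε, 1 := (setLIntegral_one _).symm
    _ ≤ ∫⁻ y in ball c ε, ENNReal.ofReal (g y) :=
        setLIntegral_mono' measurableSet_ball fun z hz => ENNReal.one_le_ofReal.2 (hg z hz)
    _ ≤ ∫⁻ y in ball x R, ENNReal.ofReal (g y) := lintegral_mono_set hsub

noncomputable def gridCubeCenter (p : ℝ) (y : EuclideanSpace ℝ (Fin d)) :
    EuclideanSpace ℝ (Fin d) :=
  WithLp.toLp 2 fun i => (⌊y i * p⌋ + 1 / 2) / p

theorem floor_mul_eq_of_mem_ball_gridCubeCenter {p : ℝ} (hp : 0 < p)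
    {y z : EuclideanSpace ℝ (Fin d)} (hz : z ∈ ball (gridCubeCenter p y) (1 / (2 * p)))
    (i : Fin d) : ⌊z i * p⌋ = ⌊y i * p⌋ := by
  have hcoord : |z i - gridCubeCenter p y i| < 1 / (2 * p) :=
    (PiLp.norm_apply_le (z - gridCubeCenter p y) i).trans_lt (mem_ball_iff_norm.1 hz)
  have hscaled : |z i * p - (⌊y i * p⌋ + 1 / 2)| < 1 / 2 := by
    have hcenter : z i * p - (⌊y i * p⌋ + 1 / 2) = (z i - gridCubeCenter p y i) * p := by
      simp only [gridCubeCenter]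
      field_simp
    rw [hcenter, abs_mul, abs_of_pos hp]
    calc _ < 1 / (2 * p) * p := by gcongr
      _ = 1 / 2 := by field_simp
  rw [Int.floor_eq_iff]
  constructor <;> linarith [abs_lt.1 hscaled]

theorem dist_gridCubeCenter_le {p : ℝ} (hp : 0 < p) (y : EuclideanSpace ℝ (Fin d)) :
    dist (gridCubeCenter p y) y ≤ √d / (2 * p) := by
  have hcoord : ∀ i, dist (gridCubeCenter p y i) (y i) ≤ 1 / (2 * p) := by
    intro i
    have h1 := Int.floor_le (y i * p)
    have h2 := Int.lt_floor_add_one (y i * p)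
    have hcenter : gridCubeCenter p y i - y i = (⌊y i * p⌋ + 1 / 2 - y i * p) / p := by
      simp only [gridCubeCenter]
      field_simp
    have hscaled : |⌊y i * p⌋ + 1 / 2 - y i * p| ≤ 1 / 2 :=
      abs_le.2 ⟨by linarith, by linarith⟩
    rw [Real.dist_eq, hcenter, abs_div, abs_of_pos hp, ← div_div]
    gcongr
  rw [EuclideanSpace.dist_eq, Real.sqrt_le_left (by positivity)]
  calc ∑ i, dist (gridCubeCenter p y i) (y i) ^ 2 ≤ ∑ _i : Fin d, (1 / (2 * p)) ^ 2 := by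
        gcongr with i; exact hcoord i
    _ = (√d / (2 * p)) ^ 2 := by
        rw [Finset.sum_const, Finset.card_univ, Fintype.card_fin, nsmul_eq_mul, div_pow,
          div_pow, Real.sq_sqrt d.cast_nonneg]
        ring

theorem ofReal_div_pow_le_hlMax_s19 {g : EuclideanSpace ℝ (Fin d) → ℝ} {p r : ℝ} (hp : 0 < p)
    (hpr : 1 ≤ p * r) {x y : EuclideanSpace ℝ (Fin d)} (hxy : dist x y < r)
    (hg : ∀ z, (∀ i, ⌊z i * p⌋ = ⌊y i * p⌋) → 1 ≤ g z) :
    ENNReal.ofReal (((2 * (2 + d) : ℝ)⁻¹ / (p * r)) ^ d) ≤ hlMax d g x := by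
  have hr : 0 < r := pos_of_mul_pos_right (one_pos.trans_le hpr) hp.le
  have hsub : ball (gridCubeCenter p y) (1 / (2 * p)) ⊆ ball x ((2 + d) * r) := by
    intro z hz
    have hcube : 1 / (2 * p) + √d / (2 * p) ≤ (1 + d) * r := by
      have hsqrt : √d ≤ 1 + d := Real.sqrt_le_left (by positivity) |>.2 (by nlinarith)
      rw [← add_div, div_le_iff₀ (by positivity)]
      nlinarith
    calc dist z x ≤ dist z (gridCubeCenter p y) + dist (gridCubeCenter p y) y + dist y x :=
          dist_triangle4 _ _ _ _
      _ < 1 / (2 * p) + √d / (2 * p) + r := by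
          have hzc : dist z (gridCubeCenter p y) < 1 / (2 * p) := hz
          linarith [dist_gridCubeCenter_le hp y, dist_comm x y]
      _ ≤ (2 + d) * r := by linarith
  have hratio := Measure.addHaar_ball_div_addHaar_ball volume (gridCubeCenter p y) x
    (by positivity : 0 < 1 / (2 * p)) (by positivity : 0 < (2 + d) * r)
  rw [finrank_euclideanSpace_fin] at hratio
  calc ENNReal.ofReal (((2 * (2 + d) : ℝ)⁻¹ / (p * r)) ^ d)
      = volume (ball (gridCubeCenter p y) (1 / (2 * p))) / volume (ball x ((2 + d) * r)) := by
        rw [hratio]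
        congr 2
        field_simp
    _ ≤ hlMax d g x := volume_ball_div_volume_ball_le_hlMax (by positivity) hsub
        fun z hz => hg z (floor_mul_eq_of_mem_ball_gridCubeCenter hp hz)

theorem ofReal_div_one_add_mul_infDist_pow_le_hlMax {g : EuclideanSpace ℝ (Fin d) → ℝ} {p : ℝ}
    (hp : 0 < p) {S : Set (EuclideanSpace ℝ (Fin d))} (hS : S.Nonempty)
    (hg : ∀ y ∈ S, ∀ z, (∀ i, ⌊z i * p⌋ = ⌊y i * p⌋) → 1 ≤ g z) (x : EuclideanSpace ℝ (Fin d)) :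
    ENNReal.ofReal (((2 * (2 + d) : ℝ)⁻¹ / (1 + p * infDist x S)) ^ d) ≤ hlMax d g x := by
  obtain ⟨y, hy, hxy⟩ := (infDist_lt_iff hS).1 (lt_add_of_pos_right (infDist x S) (inv_pos.2 hp))
  have hpr : p * (infDist x S + p⁻¹) = 1 + p * infDist x S := by
    rw [mul_add, mul_inv_cancel₀ hp.ne', add_comm]
  rw [← hpr]
  refine ofReal_div_pow_le_hlMax_s19 hp ?_ hxy (hg y hy)
  rw [hpr]
  exact le_add_of_nonneg_right (mul_nonneg hp.le infDist_nonneg)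

end Euclidean

theorem ofReal_le_mul_rpow_of_le_div_pow {a b c t s : ℝ} {d K : ℕ} {M : ENNReal} (hs : 0 < s)
    (hb : 0 ≤ b) (hc : 0 < c) (ht : 1 ≤ t) (hK : d / s ≤ K) (ha : a ≤ b / t ^ K)
    (hM : ENNReal.ofReal ((c / t) ^ d) ≤ M) :
    ENNReal.ofReal a ≤ ENNReal.ofReal (b / c ^ (d / s)) * M ^ (1 / s) := by
  have ht0 : 0 < t := one_pos.trans_le ht
  have hreal : a ≤ b / c ^ (d / s) * ((c / t) ^ d) ^ (1 / s) := by
    rw [← Real.rpow_natCast, ← Real.rpow_mul (by positivity), mul_one_div,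
      Real.div_rpow hc.le ht0.le, div_mul_div_cancel₀ (by positivity)]
    calc a ≤ b / t ^ K := ha
      _ = b / t ^ (K : ℝ) := by rw [Real.rpow_natCast]
      _ ≤ b / t ^ ((d : ℝ) / s) := by gcongr
  calc ENNReal.ofReal a ≤ ENNReal.ofReal (b / c ^ (d / s) * ((c / t) ^ d) ^ (1 / s)) :=
        ENNReal.ofReal_le_ofReal hreal
    _ = ENNReal.ofReal (b / c ^ (d / s)) * ENNReal.ofReal ((c / t) ^ d) ^ (1 / s) := by
        rw [ENNReal.ofReal_mul (by positivity),
          ENNReal.ofReal_rpow_of_nonneg (by positivity) (by positivity)]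
    _ ≤ ENNReal.ofReal (b / c ^ (d / s)) * M ^ (1 / s) := by gcongr

theorem schwartz_convolution_maximal_bound_general (d : ℕ) (s : ℝ)
    (hs0 : 0 < s) (η : SchwartzMap (EuclideanSpace ℝ (Fin d)) ℝ) :
    ∃ C : ℝ, 0 < C ∧ ∀ (n : ℕ) (h : EuclideanSpace ℝ (Fin d) → ℝ),
      Measurable h → (∀ x, h x = 0 ∨ h x = 1) →
      (∀ x y : EuclideanSpace ℝ (Fin d),
        (∀ i, ⌊x i * 2 ^ n⌋ = ⌊y i * 2 ^ n⌋) → h x = h y) →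
      ∀ x : EuclideanSpace ℝ (Fin d),
        ENNReal.ofReal |∫ y, (2 : ℝ) ^ (n * d) * η ((2 : ℝ) ^ n • (x - y)) * h y|
          ≤ ENNReal.ofReal C * (hlMax d (fun z => h z ^ s) x) ^ (1 / s) := by
  set K := ⌈(d : ℝ) / s⌉₊
  obtain ⟨B, hB, hη⟩ := η.exists_norm_le_div_one_add_norm_pow (d + 1 + K)
  set I := ∫ u : EuclideanSpace ℝ (Fin d), ((1 + ‖u‖) ^ (d + 1))⁻¹
  have hI : 0 ≤ I := integral_nonneg fun u => by positivity
  set c₀ : ℝ := (2 * (2 + d))⁻¹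
  refine ⟨(B * I + 1) / c₀ ^ (d / s), by positivity, fun n h _ hvals hcube x => ?_⟩
  set S := {y | h y = 1}
  rcases S.eq_empty_or_nonempty with hS | hS
  · have hzero : ∀ y, h y = 0 := fun y => (hvals y).resolve_right fun hy => hS.subset hy
    simp [hzero]
  set p : ℝ := 2 ^ n
  have hp : 0 < p := by positivity
  have hconv := abs_integral_rescaled_mul_le volume (N := d + 1) hB (by simp)
    (fun z => by simpa only [Real.norm_eq_abs] using hη z)
    (fun y => by rcases hvals y with hy | hy <;> simp [hy])
    (fun y hy => (hvals y).resolve_right hy) hp x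
  rw [finrank_euclideanSpace_fin, ← pow_mul] at hconv
  have hmax := ofReal_div_one_add_mul_infDist_pow_le_hlMax (g := fun z => h z ^ s) hp hS
    (fun y (hy : h y = 1) z hz => by rw [hcube z y hz, hy, Real.one_rpow]) x
  have ht : 1 ≤ 1 + p * infDist x S := le_add_of_nonneg_right (mul_nonneg hp.le infDist_nonneg)
  refine ofReal_le_mul_rpow_of_le_div_pow hs0 (by positivity) (by positivity) ht (Nat.le_ceil _)
    (hconv.trans ?_) hmax
  rw [div_mul_eq_mul_div]
  exact div_le_div_of_nonneg_right (by linarith) (pow_pos (one_pos.trans_le ht) K).le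

/-- If `h : ℝ^d → {0,1}` is a union of indicators of (disjoint) dyadic cubes of
sidelength `2^{-n}` (i.e. constant on each such cube) and `η` is a Schwartz function with
`η_n(x) = 2^{nd} η(2^n x)`, then `|η_n * h(x)| ≤ C_s (M(h^s)(x))^{1/s}` for all `x`,
with `C_s` depending only on `η, s, d`. -/
theorem schwartz_convolution_maximal_bound (d : ℕ) (hd : 1 ≤ d) (s : ℝ)
    (hs0 : 0 < s) (hs1 : s ≤ 1) (η : SchwartzMap (EuclideanSpace ℝ (Fin d)) ℝ) :
    ∃ C : ℝ, 0 < C ∧ ∀ (n : ℕ) (h : EuclideanSpace ℝ (Fin d) → ℝ),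
      Measurable h → (∀ x, h x = 0 ∨ h x = 1) →
      (∀ x y : EuclideanSpace ℝ (Fin d),
        (∀ i, ⌊x i * 2 ^ n⌋ = ⌊y i * 2 ^ n⌋) → h x = h y) →
      ∀ x : EuclideanSpace ℝ (Fin d),
        ENNReal.ofReal |∫ y, (2 : ℝ) ^ (n * d) * η ((2 : ℝ) ^ n • (x - y)) * h y|
          ≤ ENNReal.ofReal C * (hlMax d (fun z => h z ^ s) x) ^ (1 / s) :=
  schwartz_convolution_maximal_bound_general d s hs0 η
end
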